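/- (Consequence of Proposition 2.) Suppose σ² ≥ 0, the block matrices Θ and K are positive semidefinite, Θ − K is positive semidefinite, and Θ_XX + σ²I and K_XX + σ²I are invertible. Then Σ_NTKGP − Σ_NNGP is positive semidefinite. -/

import Mathlib

open Matrix
open scoped ComplexOrder

/-!
Adding `σ²I` to both top-left blocks leaves `Θ - K` unchanged, so the claim is the monotonicity
of Schur complements in the Loewner order. Let `[[A₁, A₂], [A₂ᴴ, A₃]] ≥ [[B₁, B₂], [B₂ᴴ, B₃]]` with
`B₁ > 0`, and let `S = B₃ - B₂ᴴ B₁⁻¹ B₂`. Then `[[A₁, A₂], [A₂ᴴ, A₃ - S]]` is the sum of the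
difference of the two block matrices and `[[B₁, B₂], [B₂ᴴ, B₃ - S]]`, whose Schur complement
vanishes. Hence it is positive semidefinite, and so is its Schur complement `(A₃ - A₂ᴴ A₁⁻¹ A₂) - S`.
-/

namespace Matrix

theorem fromBlocks_sub {l m n o α : Type*} [Sub α] (A : Matrix n l α) (B : Matrix n m α)
    (C : Matrix o l α) (D : Matrix o m α) (A' : Matrix n l α) (B' : Matrix n m α)
    (C' : Matrix o l α) (D' : Matrix o m α) :
    fromBlocks A B C D - fromBlocks A' B' C' D' = fromBlocks (A - A') (B - B') (C - C') (D - D') := by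
  ext (_ | _) (_ | _) <;> rfl

variable {𝕜 n m : Type*} [RCLike 𝕜] [Fintype n] [DecidableEq n] [Fintype m]

theorem PosSemidef.posDef_of_isUnit_det {A : Matrix n n 𝕜} (hA : A.PosSemidef)
    (hdet : IsUnit A.det) : A.PosDef :=
  hA.posDef_iff_isUnit.mpr ((isUnit_iff_isUnit_det A).mpr hdet)

theorem PosDef.posSemidef_fromBlocks_conjTranspose_mul_inv_mul {A : Matrix n n 𝕜}
    (hA : A.PosDef) (B : Matrix n m 𝕜) : (fromBlocks A B Bᴴ (Bᴴ * A⁻¹ * B)).PosSemidef := by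
  have := hA.isUnit.invertible
  rw [hA.fromBlocks₁₁, sub_self]
  exact .zero

theorem PosDef.posSemidef_sub_schurComplement {A₁ B₁ : Matrix n n 𝕜} (A₂ B₂ : Matrix n m 𝕜)
    (A₃ B₃ : Matrix m m 𝕜) (hB₁ : B₁.PosDef)
    (h : (fromBlocks A₁ A₂ A₂ᴴ A₃ - fromBlocks B₁ B₂ B₂ᴴ B₃).PosSemidef) :
    ((A₃ - A₂ᴴ * A₁⁻¹ * A₂) - (B₃ - B₂ᴴ * B₁⁻¹ * B₂)).PosSemidef := by
  set S := B₃ - B₂ᴴ * B₁⁻¹ * B₂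
  have hA₁ : A₁.PosDef := by
    have h₁₁ : (A₁ - B₁).PosSemidef := by
      rw [fromBlocks_sub] at h
      exact h.submatrix Sum.inl
    simpa using hB₁.add_posSemidef h₁₁
  have := hA₁.isUnit.invertible
  have hsplit : fromBlocks A₁ A₂ A₂ᴴ (A₃ - S) =
      fromBlocks B₁ B₂ B₂ᴴ (B₂ᴴ * B₁⁻¹ * B₂) +
        (fromBlocks A₁ A₂ A₂ᴴ A₃ - fromBlocks B₁ B₂ B₂ᴴ B₃) := by
    simp only [fromBlocks_sub, fromBlocks_add, S]
    congr 1 <;> abel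
  have hblock : (fromBlocks A₁ A₂ A₂ᴴ (A₃ - S)).PosSemidef := by
    rw [hsplit]
    exact (hB₁.posSemidef_fromBlocks_conjTranspose_mul_inv_mul B₂).add h
  rw [sub_right_comm]
  exact (hA₁.fromBlocks₁₁ A₂ (A₃ - S)).mp hblock

end Matrix

theorem stmt3_general (n m : ℕ) (σ2 : ℝ) (hσ : 0 ≤ σ2)
    (ΘXX KXX : Matrix (Fin n) (Fin n) ℝ)
    (ΘXX' KXX' : Matrix (Fin n) (Fin m) ℝ)
    (ΘX'X' KX'X' : Matrix (Fin m) (Fin m) ℝ)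
    (hK : (Matrix.fromBlocks KXX KXX' KXX'ᵀ KX'X').PosSemidef)
    (hΘK : (Matrix.fromBlocks ΘXX ΘXX' ΘXX'ᵀ ΘX'X' -
      Matrix.fromBlocks KXX KXX' KXX'ᵀ KX'X').PosSemidef)
    (hKinv : IsUnit (KXX + σ2 • (1 : Matrix (Fin n) (Fin n) ℝ)).det) :
    let ΘX'X := ΘXX'ᵀ
    let KX'X := KXX'ᵀ
    let SigNNGP := KX'X' - KX'X * (KXX + σ2 • 1)⁻¹ * KXX'
    let SigNTKGP := ΘX'X' - ΘX'X * (ΘXX + σ2 • 1)⁻¹ * ΘXX'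
    (SigNTKGP - SigNNGP).PosSemidef := by
  intro ΘX'X KX'X SigNNGP SigNTKGP
  have hnoise : (σ2 • (1 : Matrix (Fin n) (Fin n) ℝ)).PosSemidef := PosSemidef.one.smul hσ
  have hKnoisy : (KXX + σ2 • 1).PosDef :=
    ((hK.submatrix Sum.inl).add hnoise).posDef_of_isUnit_det hKinv
  have hnoisy : fromBlocks (ΘXX + σ2 • 1) ΘXX' ΘXX'ᴴ ΘX'X' -
      fromBlocks (KXX + σ2 • 1) KXX' KXX'ᴴ KX'X' =
      fromBlocks ΘXX ΘXX' ΘXX'ᵀ ΘX'X' - fromBlocks KXX KXX' KXX'ᵀ KX'X' := by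
    simp only [fromBlocks_sub, add_sub_add_right_eq_sub, conjTranspose_eq_transpose_of_trivial]
  simpa only [conjTranspose_eq_transpose_of_trivial] using
    hKnoisy.posSemidef_sub_schurComplement ΘXX' KXX' ΘX'X' KX'X' (hnoisy ▸ hΘK)

/-- consequence of Proposition 2. If `σ² ≥ 0`, the block matrices `Θ` and
`K` are positive semidefinite, `Θ − K` is positive semidefinite, and `Θ_XX + σ²I`,
`K_XX + σ²I` are invertible, then `Σ_NTKGP − Σ_NNGP` is positive semidefinite. -/
theorem stmt3 (n m : ℕ) (hn : 0 < n) (hm : 0 < m) (σ2 : ℝ) (hσ : 0 ≤ σ2)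
    (ΘXX KXX : Matrix (Fin n) (Fin n) ℝ) (hΘsymm : ΘXX.IsSymm) (hKsymm : KXX.IsSymm)
    (ΘXX' KXX' : Matrix (Fin n) (Fin m) ℝ)
    (ΘX'X' KX'X' : Matrix (Fin m) (Fin m) ℝ)
    (hΘ : (Matrix.fromBlocks ΘXX ΘXX' ΘXX'ᵀ ΘX'X').PosSemidef)
    (hK : (Matrix.fromBlocks KXX KXX' KXX'ᵀ KX'X').PosSemidef)
    (hΘK : (Matrix.fromBlocks ΘXX ΘXX' ΘXX'ᵀ ΘX'X' -
      Matrix.fromBlocks KXX KXX' KXX'ᵀ KX'X').PosSemidef)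
    (hΘinv : IsUnit (ΘXX + σ2 • (1 : Matrix (Fin n) (Fin n) ℝ)).det)
    (hKinv : IsUnit (KXX + σ2 • (1 : Matrix (Fin n) (Fin n) ℝ)).det) :
    let ΘX'X := ΘXX'ᵀ
    let KX'X := KXX'ᵀ
    let SigNNGP := KX'X' - KX'X * (KXX + σ2 • 1)⁻¹ * KXX'
    let SigNTKGP := ΘX'X' - ΘX'X * (ΘXX + σ2 • 1)⁻¹ * ΘXX'
    (SigNTKGP - SigNNGP).PosSemidef :=
  stmt3_general n m σ2 hσ ΘXX KXX ΘXX' KXX' ΘX'X' KX'X' hK hΘK hKinv
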